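/- Let W, U, Z be finitely-valued random variables such that both W − U − Z and U − W − Z are Markov chains. Suppose w₁, w₂ ∈ 𝒲 satisfy P_W(w₁) > 0, P_W(w₂) > 0, and there exists z ∈ 𝒵 with P_{Z|W}(z|w₁) ≠ P_{Z|W}(z|w₂). Then for every u ∈ 𝒰, at least one of P_{U|W}(u|w₁) and P_{U|W}(u|w₂) equals zero. -/

import Mathlib

open Finset

section PD
variable {Ω α β γ : Type*}

open Classical in
/-- Pushforward distribution of `p` under the random variable `f`. -/
noncomputable def push [Fintype Ω] (p : Ω → ℝ) (f : Ω → α) : α → ℝ :=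
  fun a => ∑ ω, if f ω = a then p ω else 0

/-- Shannon entropy (base 2) of a pmf on a finite alphabet. -/
noncomputable def ent [Fintype α] (q : α → ℝ) : ℝ := -∑ a, q a * Real.logb 2 (q a)

/-- Entropy of a random variable `f` under the distribution `p` on the sample space. -/
noncomputable def H [Fintype Ω] [Fintype α] (p : Ω → ℝ) (f : Ω → α) : ℝ := ent (push p f)

/-- Conditional entropy `H(f | g)`. -/
noncomputable def condH [Fintype Ω] [Fintype α] [Fintype β] (p : Ω → ℝ) (f : Ω → α) (g : Ω → β) : ℝ :=
  H p (fun ω => (f ω, g ω)) - H p g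

/-- Mutual information `I(f ; g)`. -/
noncomputable def mi [Fintype Ω] [Fintype α] [Fintype β] (p : Ω → ℝ) (f : Ω → α) (g : Ω → β) : ℝ :=
  H p f + H p g - H p (fun ω => (f ω, g ω))

/-- Conditional mutual information `I(f ; g | h)`. -/
noncomputable def cmi [Fintype Ω] [Fintype α] [Fintype β] [Fintype γ]
    (p : Ω → ℝ) (f : Ω → α) (g : Ω → β) (h : Ω → γ) : ℝ :=
  condH p f h + condH p g h - condH p (fun ω => (f ω, g ω)) h

/-- `p` is a probability mass function. -/
def IsProb [Fintype Ω] (p : Ω → ℝ) : Prop := (∀ ω, 0 ≤ p ω) ∧ ∑ ω, p ω = 1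

/-- Markov chain `f − g − h`: conditional independence of `f` and `h` given `g`,
expressed as `P(a,b,c)·P(b) = P(a,b)·P(b,c)`. -/
def Markov [Fintype Ω] (p : Ω → ℝ) (f : Ω → α) (g : Ω → β) (h : Ω → γ) : Prop :=
  ∀ a b c, push p (fun ω => (f ω, g ω, h ω)) (a, b, c) * push p g b =
    push p (fun ω => (f ω, g ω)) (a, b) * push p (fun ω => (g ω, h ω)) (b, c)

open Classical in
/-- Kullback–Leibler divergence (base 2), with the sum restricted to the support of `P`. -/
noncomputable def KL [Fintype α] (P Q : α → ℝ) : ℝ :=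
  ∑ a, if 0 < P a then P a * Real.logb 2 (P a / Q a) else 0

end PD

/-!
Where `P(w, u) > 0`, conditioning `Z` on `(W, U)` may drop either coordinate: `U − W − Z`
gives `P(z | w) = P(z | w, u)` and `W − U − Z` gives `P(z | w, u) = P(z | u)`. So every `w`
that shares some `u` in its support has `P(· | w) = P(· | u)`, and two values of `W` with
different channel laws cannot share any `u`.
-/

section Push

variable {Ω α β : Type*} [Fintype Ω] (p : Ω → ℝ)

lemma push_nonneg (hp : ∀ ω, 0 ≤ p ω) (f : Ω → α) (a : α) : 0 ≤ push p f a := by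
  classical
  exact sum_nonneg fun ω _ => by split_ifs <;> simp [hp ω]

lemma push_comp_of_injective {e : α → β} (he : e.Injective) (f : Ω → α) (a : α) :
    push p (fun ω => e (f ω)) (e a) = push p f a := by
  classical
  simp only [push, he.eq_iff]

lemma push_pair_le_push_snd (hp : ∀ ω, 0 ≤ p ω) (f : Ω → α) (g : Ω → β) (a : α) (b : β) :
    push p (fun ω => (f ω, g ω)) (a, b) ≤ push p g b := by
  classical
  refine sum_le_sum fun ω _ => ?_
  by_cases hg : g ω = b <;> by_cases hf : f ω = a <;> simp [hf, hg, hp ω]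

end Push

section Markov

variable {Ω α β γ : Type*} [Fintype Ω] {p : Ω → ℝ} {f : Ω → α} {g : Ω → β} {h : Ω → γ}

lemma Markov.cond_pair_eq_cond (hm : Markov p f g h) {a : α} {b : β} (c : γ)
    (hab : push p (fun ω => (f ω, g ω)) (a, b) ≠ 0) (hb : push p g b ≠ 0) :
    push p (fun ω => (f ω, g ω, h ω)) (a, b, c) / push p (fun ω => (f ω, g ω)) (a, b) =
      push p (fun ω => (g ω, h ω)) (b, c) / push p g b := by
  rw [div_eq_div_iff hab hb]
  linear_combination hm a b c

end Markov

lemma cond_eq_of_markov_of_markov {Ω W U Z : Type*} [Fintype Ω] {p : Ω → ℝ}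
    (hp : ∀ ω, 0 ≤ p ω) {fW : Ω → W} {fU : Ω → U} {fZ : Ω → Z}
    (hWUZ : Markov p fW fU fZ) (hUWZ : Markov p fU fW fZ) {w : W} {u : U} (z : Z)
    (hwu : push p (fun ω => (fW ω, fU ω)) (w, u) ≠ 0) (hw : push p fW w ≠ 0) :
    push p (fun ω => (fW ω, fZ ω)) (w, z) / push p fW w =
      push p (fun ω => (fU ω, fZ ω)) (u, z) / push p fU u := by
  have hu : push p fU u ≠ 0 :=
    ((lt_of_le_of_ne (push_nonneg p hp _ _) hwu.symm).trans_le
      (push_pair_le_push_snd p hp fW fU w u)).ne'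
  have swap₂ : push p (fun ω => (fU ω, fW ω)) (u, w) = push p (fun ω => (fW ω, fU ω)) (w, u) :=
    push_comp_of_injective p Prod.swap_injective (fun ω => (fW ω, fU ω)) (w, u)
  have swap₃ : push p (fun ω => (fU ω, fW ω, fZ ω)) (u, w, z) =
      push p (fun ω => (fW ω, fU ω, fZ ω)) (w, u, z) :=
    push_comp_of_injective p (e := fun x : W × U × Z => (x.2.1, x.1, x.2.2))
      (fun _ _ hx => by simp_all [Prod.ext_iff]) (fun ω => (fW ω, fU ω, fZ ω)) (w, u, z)
  calc push p (fun ω => (fW ω, fZ ω)) (w, z) / push p fW w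
      = push p (fun ω => (fU ω, fW ω, fZ ω)) (u, w, z) /
          push p (fun ω => (fU ω, fW ω)) (u, w) :=
        (hUWZ.cond_pair_eq_cond z (swap₂ ▸ hwu) hw).symm
    _ = push p (fun ω => (fW ω, fU ω, fZ ω)) (w, u, z) /
          push p (fun ω => (fW ω, fU ω)) (w, u) := by rw [swap₂, swap₃]
    _ = push p (fun ω => (fU ω, fZ ω)) (u, z) / push p fU u :=
        hWUZ.cond_pair_eq_cond z hwu hu

theorem disjoint_conditional_support_general {Ω W U Z : Type*}
    [Fintype Ω]
    (p : Ω → ℝ) (hp : IsProb p)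
    (fW : Ω → W) (fU : Ω → U) (fZ : Ω → Z)
    (hWUZ : Markov p fW fU fZ) (hUWZ : Markov p fU fW fZ)
    (w₁ w₂ : W)
    (z : Z)
    (hdiff : push p (fun ω => (fW ω, fZ ω)) (w₁, z) / push p fW w₁ ≠
             push p (fun ω => (fW ω, fZ ω)) (w₂, z) / push p fW w₂) :
    ∀ u : U, push p (fun ω => (fW ω, fU ω)) (w₁, u) / push p fW w₁ = 0 ∨
             push p (fun ω => (fW ω, fU ω)) (w₂, u) / push p fW w₂ = 0 := by
  intro u
  by_contra! hboth
  obtain ⟨⟨hw₁u, hw₁⟩, ⟨hw₂u, hw₂⟩⟩ := And.imp div_ne_zero_iff.mp div_ne_zero_iff.mp hboth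
  exact hdiff <| (cond_eq_of_markov_of_markov hp.1 hWUZ hUWZ z hw₁u hw₁).trans
    (cond_eq_of_markov_of_markov hp.1 hWUZ hUWZ z hw₂u hw₂).symm

/-- if both `W − U − Z` and `U − W − Z` are Markov chains, and
`w₁, w₂` have positive probability but distinct conditional channel laws
`P_{Z|W}(·|w₁) ≠ P_{Z|W}(·|w₂)`, then for every `u`, at least one of
`P_{U|W}(u|w₁)` and `P_{U|W}(u|w₂)` is zero. -/
theorem disjoint_conditional_support {Ω W U Z : Type*}
    [Fintype Ω] [Fintype W] [Fintype U] [Fintype Z]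
    (p : Ω → ℝ) (hp : IsProb p)
    (fW : Ω → W) (fU : Ω → U) (fZ : Ω → Z)
    (hWUZ : Markov p fW fU fZ) (hUWZ : Markov p fU fW fZ)
    (w₁ w₂ : W)
    (h₁ : 0 < push p fW w₁) (h₂ : 0 < push p fW w₂)
    (z : Z)
    (hdiff : push p (fun ω => (fW ω, fZ ω)) (w₁, z) / push p fW w₁ ≠
             push p (fun ω => (fW ω, fZ ω)) (w₂, z) / push p fW w₂) :
    ∀ u : U, push p (fun ω => (fW ω, fU ω)) (w₁, u) / push p fW w₁ = 0 ∨
             push p (fun ω => (fW ω, fU ω)) (w₂, u) / push p fW w₂ = 0 :=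
  disjoint_conditional_support_general p hp fW fU fZ hWUZ hUWZ w₁ w₂ z hdiff
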